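/- Let E be a Banach space, T > 0 and 0 < α ≤ 1 < β. Let A and (Aⁿ)_{n∈ℕ} be germs on Δ₂ with ‖A‖_α, ‖δA‖_β < ∞ and ‖Aⁿ‖_α, ‖δAⁿ‖_β < ∞ for every n. Assume there is R > 0 with sup_{n∈ℕ} ‖δAⁿ‖_β ≤ R and that ‖Aⁿ − A‖_α → 0 as n → ∞. Then the sewings converge in α-Hölder norm: sup_{(s,t)∈Δ₂, s≠t} ‖((IA)_t − (IA)_s) − ((IAⁿ)_t − (IAⁿ)_s)‖_E / |t−s|^α → 0 as n → ∞. -/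

import Mathlib

open Filter

/-! Put `B = A - Aⁿ`. Then `‖B‖_α ≤ ε` forces `‖δB‖_α ≤ 3ε`, while `‖δB‖_β ≤ ‖δA‖_β + R` stays
bounded; interpolating, `‖δB‖_γ ≤ (3ε)^θ M^(1-θ)` for `γ = αθ + β(1-θ) > 1`. Refining each interval
of the `k`-th dyadic partition of `[s, t]` at its midpoint costs one value of `δB`, so consecutive
dyadic Riemann sums differ by at most `C (t-s)^γ 2^(k(1-γ))`; summing this geometric series gives
the sewing estimate `‖(IB)_{s,t} - B s t‖ ≤ C (t-s)^γ / (1 - 2^(1-γ))`. Together with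
`‖B s t‖ ≤ ε (t-s)^α` and `(t-s)^γ ≤ T^(γ-α) (t-s)^α`, the `α`-Hölder norm of `IB` is at most
`ε + O(ε^θ)`. -/

/-- A partition of the interval `[s, t]` into finitely many consecutive subintervals. -/
structure SewingPartition (s t : ℝ) where
  n : ℕ
  pts : Fin (n + 1) → ℝ
  mono : Monotone pts
  first : pts 0 = s
  last : pts (Fin.last n) = t

/-- The mesh of a partition. -/
noncomputable def SewingPartition.mesh {s t : ℝ} (P : SewingPartition s t) : ℝ :=
  ⨆ i : Fin P.n, (P.pts i.succ - P.pts i.castSucc)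

/-- The Riemann sum of a germ `A` along a partition `P` of `[s, t]`. -/
noncomputable def riemannSum {E : Type*} [NormedAddCommGroup E] {s t : ℝ}
    (A : ℝ → ℝ → E) (P : SewingPartition s t) : E :=
  ∑ i : Fin P.n, A (P.pts i.castSucc) (P.pts i.succ)

/-- `IA` is the sewing of the germ `A` on `[0,T]`: `IA 0 = 0` and for every
`(s,t) ∈ Δ₂`, the Riemann sums of `A` along any sequence of partitions of `[s,t]` with
mesh tending to `0` converge to `IA t - IA s`. -/
def IsSewing {E : Type*} [NormedAddCommGroup E] (T : ℝ) (A : ℝ → ℝ → E) (IA : ℝ → E) : Prop :=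
  IA 0 = 0 ∧
    ∀ s t : ℝ, 0 ≤ s → s ≤ t → t ≤ T →
      ∀ P : ℕ → SewingPartition s t,
        Tendsto (fun k => (P k).mesh) atTop (nhds 0) →
        Tendsto (fun k => riemannSum A (P k)) atTop (nhds (IA t - IA s))

section Dyadic

variable {E : Type*} [NormedAddCommGroup E]

noncomputable def dyadicPoint (s t : ℝ) (k i : ℕ) : ℝ :=
  s + i * ((t - s) / 2 ^ k)

lemma dyadicPoint_zero (s t : ℝ) (k : ℕ) : dyadicPoint s t k 0 = s := by
  simp [dyadicPoint]

lemma dyadicPoint_two_pow (s t : ℝ) (k : ℕ) : dyadicPoint s t k (2 ^ k) = t := by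
  simp only [dyadicPoint]; push_cast; field_simp; ring

lemma dyadicPoint_succ_sub (s t : ℝ) (k i : ℕ) :
    dyadicPoint s t k (i + 1) - dyadicPoint s t k i = (t - s) / 2 ^ k := by
  simp only [dyadicPoint]; push_cast; ring

lemma dyadicPoint_succ_two_mul (s t : ℝ) (k i : ℕ) :
    dyadicPoint s t (k + 1) (2 * i) = dyadicPoint s t k i := by
  simp only [dyadicPoint]; push_cast; field_simp; ring

lemma dyadicPoint_succ_two_mul_add_two (s t : ℝ) (k i : ℕ) :
    dyadicPoint s t (k + 1) (2 * i + 2) = dyadicPoint s t k (i + 1) := by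
  simpa [mul_add] using dyadicPoint_succ_two_mul s t k (i + 1)

lemma monotone_dyadicPoint {s t : ℝ} (hst : s ≤ t) (k : ℕ) : Monotone (dyadicPoint s t k) :=
  fun i j hij => by
    have : 0 ≤ (t - s) / 2 ^ k := div_nonneg (sub_nonneg.2 hst) (by positivity)
    simp only [dyadicPoint]; gcongr

noncomputable def dyadicPartition {s t : ℝ} (hst : s ≤ t) (k : ℕ) : SewingPartition s t where
  n := 2 ^ k
  pts i := dyadicPoint s t k i
  mono := (monotone_dyadicPoint hst k).comp Fin.val_strictMono.monotone
  first := dyadicPoint_zero s t k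
  last := dyadicPoint_two_pow s t k

lemma dyadicPartition_mesh {s t : ℝ} (hst : s ≤ t) (k : ℕ) :
    (dyadicPartition hst k).mesh = (t - s) / 2 ^ k := by
  have : Nonempty (Fin (2 ^ k)) := ⟨⟨0, by positivity⟩⟩
  simp only [SewingPartition.mesh, dyadicPartition, Fin.val_succ, Fin.val_castSucc,
    dyadicPoint_succ_sub, ciSup_const]

lemma tendsto_dyadicPartition_mesh {s t : ℝ} (hst : s ≤ t) :
    Tendsto (fun k => (dyadicPartition hst k).mesh) atTop (nhds 0) := by
  simp only [dyadicPartition_mesh, div_eq_mul_inv, ← inv_pow]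
  simpa using (tendsto_pow_atTop_nhds_zero_of_lt_one (by norm_num)
    (by norm_num : (2⁻¹ : ℝ) < 1)).const_mul (t - s)

lemma riemannSum_dyadicPartition (B : ℝ → ℝ → E) {s t : ℝ} (hst : s ≤ t) (k : ℕ) :
    riemannSum B (dyadicPartition hst k)
      = ∑ i ∈ Finset.range (2 ^ k), B (dyadicPoint s t k i) (dyadicPoint s t k (i + 1)) := by
  rw [← Fin.sum_univ_eq_sum_range (fun i => B (dyadicPoint s t k i) (dyadicPoint s t k (i + 1)))]
  simp only [riemannSum, dyadicPartition, Fin.val_succ, Fin.val_castSucc]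
  rfl

end Dyadic

lemma sum_range_two_mul {M : Type*} [AddCommMonoid M] (n : ℕ) (f : ℕ → M) :
    ∑ i ∈ Finset.range (2 * n), f i = ∑ i ∈ Finset.range n, (f (2 * i) + f (2 * i + 1)) := by
  induction n with
  | zero => simp
  | succ n ih => rw [mul_add, mul_one, Finset.sum_range_succ, Finset.sum_range_succ, ih,
      Finset.sum_range_succ, add_assoc]

lemma two_pow_mul_div_two_pow_rpow {x : ℝ} (hx : 0 ≤ x) (γ : ℝ) (k : ℕ) :
    2 ^ k * (x / 2 ^ k) ^ γ = x ^ γ * (2 ^ (1 - γ)) ^ k := by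
  rw [Real.div_rpow hx (by positivity), ← Real.rpow_natCast, ← Real.rpow_natCast,
    ← Real.rpow_mul zero_le_two, ← Real.rpow_mul zero_le_two, mul_div_assoc', mul_comm,
    mul_div_assoc, ← Real.rpow_sub two_pos]
  congr 2
  ring

section Delta

variable {E : Type*} [NormedAddCommGroup E]

/-- `‖δB‖_γ ≤ C` on `[s, t]`, where `(δB)_{u,v,w} = B u w - B u v - B v w`. -/
def DeltaBoundedOn (B : ℝ → ℝ → E) (γ C s t : ℝ) : Prop :=
  ∀ u v w, s ≤ u → u ≤ v → v ≤ w → w ≤ t → ‖B u w - B u v - B v w‖ ≤ C * (w - u) ^ γ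

namespace DeltaBoundedOn

variable {B B' : ℝ → ℝ → E} {γ C C' s t s' t' : ℝ}

lemma mono (h : DeltaBoundedOn B γ C s t) (hs : s ≤ s') (ht : t' ≤ t) :
    DeltaBoundedOn B γ C s' t' :=
  fun u v w hu huv hvw hw => h u v w (hs.trans hu) huv hvw (hw.trans ht)

lemma weaken (h : DeltaBoundedOn B γ C s t) (hC : C ≤ C') : DeltaBoundedOn B γ C' s t :=
  fun u v w hu huv hvw hw => (h u v w hu huv hvw hw).trans <|
    mul_le_mul_of_nonneg_right hC (Real.rpow_nonneg (by linarith) γ)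

lemma sub (h : DeltaBoundedOn B γ C s t) (h' : DeltaBoundedOn B' γ C' s t) :
    DeltaBoundedOn (B - B') γ (C + C') s t := by
  intro u v w hu huv hvw hw
  calc ‖(B - B') u w - (B - B') u v - (B - B') v w‖
      = ‖(B u w - B u v - B v w) - (B' u w - B' u v - B' v w)‖ := by
        simp only [Pi.sub_apply]; congr 1; abel
    _ ≤ C * (w - u) ^ γ + C' * (w - u) ^ γ :=
        (norm_sub_le _ _).trans (add_le_add (h u v w hu huv hvw hw) (h' u v w hu huv hvw hw))
    _ = (C + C') * (w - u) ^ γ := by ring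

lemma interpolate {α β a b θ : ℝ} (hα : DeltaBoundedOn B α a s t) (hβ : DeltaBoundedOn B β b s t)
    (hα0 : 0 < α) (hβ0 : 0 ≤ β) (ha : 0 ≤ a) (hb : 0 ≤ b) (hθ0 : 0 < θ) (hθ1 : θ ≤ 1) :
    DeltaBoundedOn B (α * θ + β * (1 - θ)) (a ^ θ * b ^ (1 - θ)) s t := by
  intro u v w hu huv hvw hw
  set x := ‖B u w - B u v - B v w‖
  have hh : 0 ≤ w - u := by linarith
  have hx : 0 ≤ x := norm_nonneg _
  calc x = x ^ θ * x ^ (1 - θ) := by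
        rw [← Real.rpow_add' hx (by norm_num), add_sub_cancel, Real.rpow_one]
    _ ≤ (a * (w - u) ^ α) ^ θ * (b * (w - u) ^ β) ^ (1 - θ) := by
        gcongr
        · exact hα u v w hu huv hvw hw
        · exact hβ u v w hu huv hvw hw
    _ = a ^ θ * b ^ (1 - θ) * (w - u) ^ (α * θ + β * (1 - θ)) := by
        have hpos : 0 < α * θ + β * (1 - θ) := by
          have := mul_pos hα0 hθ0
          have := mul_nonneg hβ0 (sub_nonneg.2 hθ1)
          linarith
        rw [Real.mul_rpow ha (by positivity), Real.mul_rpow hb (by positivity),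
          ← Real.rpow_mul hh, ← Real.rpow_mul hh, Real.rpow_add' hh hpos.ne']
        ring

end DeltaBoundedOn

lemma deltaBoundedOn_of_norm_le {B : ℝ → ℝ → E} {α c s t : ℝ} (hα : 0 ≤ α) (hc : 0 ≤ c)
    (hB : ∀ u v, s ≤ u → u ≤ v → v ≤ t → ‖B u v‖ ≤ c * (v - u) ^ α) :
    DeltaBoundedOn B α (3 * c) s t := by
  intro u v w hu huv hvw hw
  have hB' : ∀ a b, u ≤ a → a ≤ b → b ≤ w → ‖B a b‖ ≤ c * (w - u) ^ α := fun a b ha hab hb =>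
    (hB a b (hu.trans ha) hab (hb.trans hw)).trans <| by gcongr
  calc ‖B u w - B u v - B v w‖ ≤ ‖B u w‖ + ‖B u v‖ + ‖B v w‖ :=
        (norm_sub_le _ _).trans (by gcongr; exact norm_sub_le _ _)
    _ ≤ c * (w - u) ^ α + c * (w - u) ^ α + c * (w - u) ^ α := by
        gcongr
        · exact hB' u w le_rfl (huv.trans hvw) le_rfl
        · exact hB' u v le_rfl huv hvw
        · exact hB' v w huv hvw le_rfl
    _ = 3 * c * (w - u) ^ α := by ring

end Delta

section Sewing

variable {E : Type*} [NormedAddCommGroup E] {B : ℝ → ℝ → E} {γ C s t : ℝ}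

lemma DeltaBoundedOn.norm_riemannSum_dyadicPartition_sub_succ_le (h : DeltaBoundedOn B γ C s t)
    (hst : s ≤ t) (k : ℕ) :
    ‖riemannSum B (dyadicPartition hst k) - riemannSum B (dyadicPartition hst (k + 1))‖
      ≤ C * (t - s) ^ γ * (2 ^ (1 - γ)) ^ k := by
  have hmono := monotone_dyadicPoint hst k
  have hmono' := monotone_dyadicPoint hst (k + 1)
  have hdiff : riemannSum B (dyadicPartition hst k) - riemannSum B (dyadicPartition hst (k + 1))
      = ∑ i ∈ Finset.range (2 ^ k), (B (dyadicPoint s t k i) (dyadicPoint s t k (i + 1))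
          - B (dyadicPoint s t k i) (dyadicPoint s t (k + 1) (2 * i + 1))
          - B (dyadicPoint s t (k + 1) (2 * i + 1)) (dyadicPoint s t k (i + 1))) := by
    simp only [riemannSum_dyadicPartition, pow_succ', sum_range_two_mul, ← Finset.sum_sub_distrib,
      dyadicPoint_succ_two_mul, add_assoc, one_add_one_eq_two, dyadicPoint_succ_two_mul_add_two,
      sub_add_eq_sub_sub]
  have hterm : ∀ i ∈ Finset.range (2 ^ k),
      ‖B (dyadicPoint s t k i) (dyadicPoint s t k (i + 1))
          - B (dyadicPoint s t k i) (dyadicPoint s t (k + 1) (2 * i + 1))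
          - B (dyadicPoint s t (k + 1) (2 * i + 1)) (dyadicPoint s t k (i + 1))‖
        ≤ C * ((t - s) / 2 ^ k) ^ γ := by
    intro i hi
    have hs := hmono (Nat.zero_le i)
    have ht := hmono (Finset.mem_range.1 hi)
    have hl := hmono' (show 2 * i ≤ 2 * i + 1 by omega)
    have hr := hmono' (show 2 * i + 1 ≤ 2 * i + 2 by omega)
    rw [dyadicPoint_zero] at hs
    rw [dyadicPoint_two_pow] at ht
    rw [dyadicPoint_succ_two_mul] at hl
    rw [dyadicPoint_succ_two_mul_add_two] at hr
    simpa only [dyadicPoint_succ_sub] using h _ _ _ hs hl hr ht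
  calc _ ≤ ∑ i ∈ Finset.range (2 ^ k), C * ((t - s) / 2 ^ k) ^ γ :=
        hdiff ▸ norm_sum_le_of_le _ hterm
    _ = C * (2 ^ k * ((t - s) / 2 ^ k) ^ γ) := by
        rw [Finset.sum_const, Finset.card_range, nsmul_eq_mul]; push_cast; ring
    _ = C * (t - s) ^ γ * (2 ^ (1 - γ)) ^ k := by
        rw [two_pow_mul_div_two_pow_rpow (sub_nonneg.2 hst), mul_assoc]

lemma DeltaBoundedOn.norm_sub_le_of_tendsto (h : DeltaBoundedOn B γ C s t) (hγ : 1 < γ)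
    (hst : s ≤ t) {L : E}
    (hL : Tendsto (fun k => riemannSum B (dyadicPartition hst k)) atTop (nhds L)) :
    ‖L - B s t‖ ≤ C * (t - s) ^ γ / (1 - 2 ^ (1 - γ)) := by
  have hr : (2 : ℝ) ^ (1 - γ) < 1 := Real.rpow_lt_one_of_one_lt_of_neg one_lt_two (by linarith)
  have h0 : riemannSum B (dyadicPartition hst 0) = B s t := by
    have h1 : dyadicPoint s t 0 1 = t := by simpa using dyadicPoint_two_pow s t 0
    simp [riemannSum_dyadicPartition, dyadicPoint_zero, h1]
  rw [← h0, ← dist_eq_norm']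
  exact dist_le_of_le_geometric_of_tendsto₀ _ _ hr
    (fun k => (dist_eq_norm _ _).trans_le (h.norm_riemannSum_dyadicPartition_sub_succ_le hst k)) hL

end Sewing

namespace IsSewing

variable {E : Type*} [NormedAddCommGroup E] {T : ℝ} {B B' : ℝ → ℝ → E} {IB IB' : ℝ → E}

lemma sub (h : IsSewing T B IB) (h' : IsSewing T B' IB') : IsSewing T (B - B') (IB - IB') := by
  refine ⟨by simp [h.1, h'.1], fun s t hs hst htT P hP => ?_⟩
  have hsum : ∀ k, riemannSum (B - B') (P k) = riemannSum B (P k) - riemannSum B' (P k) :=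
    fun k => Finset.sum_sub_distrib _ _
  simpa only [hsum, Pi.sub_apply, sub_sub_sub_comm] using
    (h.2 s t hs hst htT P hP).sub (h'.2 s t hs hst htT P hP)

lemma norm_sub_le {γ C s t : ℝ} (h : IsSewing T B IB) (hδ : DeltaBoundedOn B γ C s t)
    (hγ : 1 < γ) (hs : 0 ≤ s) (hst : s ≤ t) (htT : t ≤ T) :
    ‖(IB t - IB s) - B s t‖ ≤ C * (t - s) ^ γ / (1 - 2 ^ (1 - γ)) :=
  hδ.norm_sub_le_of_tendsto hγ hst (h.2 s t hs hst htT _ (tendsto_dyadicPartition_mesh hst))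

lemma norm_sub_le_mul_rpow {α γ C ε s t : ℝ} (h : IsSewing T B IB)
    (hB : ∀ u v, 0 ≤ u → u ≤ v → v ≤ T → ‖B u v‖ ≤ ε * (v - u) ^ α)
    (hδ : DeltaBoundedOn B γ C 0 T) (hγ : 1 < γ) (hαγ : α ≤ γ) (hC : 0 ≤ C)
    (hs : 0 ≤ s) (hst : s ≤ t) (htT : t ≤ T) :
    ‖IB t - IB s‖ ≤ (ε + C * T ^ (γ - α) / (1 - 2 ^ (1 - γ))) * (t - s) ^ α := by
  have hr : (2 : ℝ) ^ (1 - γ) < 1 := Real.rpow_lt_one_of_one_lt_of_neg one_lt_two (by linarith)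
  have hts : 0 ≤ t - s := sub_nonneg.2 hst
  have hpow : (t - s) ^ γ ≤ T ^ (γ - α) * (t - s) ^ α := by
    rw [← sub_add_cancel γ α, Real.rpow_add' hts (by linarith), add_sub_cancel_right]
    gcongr
    linarith
  calc ‖IB t - IB s‖ ≤ ‖(IB t - IB s) - B s t‖ + ‖B s t‖ := norm_le_norm_sub_add _ _
    _ ≤ C * (t - s) ^ γ / (1 - 2 ^ (1 - γ)) + ε * (t - s) ^ α :=
        add_le_add (h.norm_sub_le (hδ.mono hs htT) hγ hs hst htT) (hB s t hs hst htT)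
    _ ≤ C * (T ^ (γ - α) * (t - s) ^ α) / (1 - 2 ^ (1 - γ)) + ε * (t - s) ^ α := by
        gcongr
    _ = (ε + C * T ^ (γ - α) / (1 - 2 ^ (1 - γ))) * (t - s) ^ α := by ring

end IsSewing

lemma exists_pos_add_rpow_mul_lt {θ : ℝ} (hθ : 0 < θ) (a c : ℝ) {ε₀ : ℝ} (hε₀ : 0 < ε₀) :
    ∃ ε > 0, ε + (a * ε) ^ θ * c < ε₀ := by
  have hcont : Continuous fun ε : ℝ => ε + (a * ε) ^ θ * c :=
    continuous_id.add (((continuous_const.mul continuous_id).rpow_const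
      fun _ => Or.inr hθ.le).mul continuous_const)
  have hf : Tendsto (fun ε : ℝ => ε + (a * ε) ^ θ * c) (nhds 0) (nhds 0) := by
    simpa [Real.zero_rpow hθ.ne'] using hcont.tendsto 0
  obtain ⟨ε, hε, hlt⟩ := ((hf.mono_left nhdsWithin_le_nhds).eventually (gt_mem_nhds hε₀)).and
    (self_mem_nhdsWithin : ∀ᶠ ε in nhdsWithin (0 : ℝ) (Set.Ioi 0), ε ∈ Set.Ioi 0) |>.exists
  exact ⟨ε, hlt, hε⟩

theorem sewing_convergence_general {E : Type*} [NormedAddCommGroup E]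
    (T : ℝ) (α β : ℝ) (hα : 0 < α) (hα1 : α ≤ 1) (hβ : 1 < β)
    (A : ℝ → ℝ → E) (An : ℕ → ℝ → ℝ → E)
    -- `‖A‖_α < ∞` and `‖δA‖_β < ∞`
    (hAβ : ∃ C : ℝ, ∀ s u t : ℝ, 0 ≤ s → s ≤ u → u ≤ t → t ≤ T →
      ‖A s t - A s u - A u t‖ ≤ C * (t - s) ^ β)
    -- `sup_n ‖δAⁿ‖_β ≤ R` (in particular `‖δAⁿ‖_β < ∞` for every `n`)
    (R : ℝ) (hR : 0 < R)
    (hAnβ : ∀ n : ℕ, ∀ s u t : ℝ, 0 ≤ s → s ≤ u → u ≤ t → t ≤ T →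
      ‖An n s t - An n s u - An n u t‖ ≤ R * (t - s) ^ β)
    -- `‖Aⁿ - A‖_α → 0`
    (hconv : ∀ ε : ℝ, 0 < ε → ∃ N : ℕ, ∀ n ≥ N, ∀ s t : ℝ, 0 ≤ s → s ≤ t → t ≤ T →
      ‖An n s t - A s t‖ ≤ ε * (t - s) ^ α)
    (IA : ℝ → E) (IAn : ℕ → ℝ → E)
    (hIA : IsSewing T A IA) (hIAn : ∀ n : ℕ, IsSewing T (An n) (IAn n)) :
    ∀ ε : ℝ, 0 < ε → ∃ N : ℕ, ∀ n ≥ N, ∀ s t : ℝ, 0 ≤ s → s ≤ t → t ≤ T →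
      ‖(IA t - IA s) - (IAn n t - IAn n s)‖ ≤ ε * (t - s) ^ α := by
  intro ε₀ hε₀
  obtain ⟨CA, hCA⟩ := hAβ
  set M := max CA 0 + R
  set θ := (β - 1) / (2 * (β - α))
  set γ := (β + 1) / 2
  have hθ0 : 0 < θ := div_pos (by linarith) (by linarith)
  have hθ1 : θ ≤ 1 := (div_le_one (by linarith)).2 (by linarith)
  have hγ : α * θ + β * (1 - θ) = γ := by
    have : β - α ≠ 0 := by linarith
    simp only [θ, γ]; field_simp; ring
  have hγ1 : 1 < γ := by simp only [γ]; linarith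
  have hαγ : α ≤ γ := by simp only [γ]; linarith
  obtain ⟨ε, hε, hsmall⟩ := exists_pos_add_rpow_mul_lt hθ0 3
    (M ^ (1 - θ) * T ^ (γ - α) / (1 - 2 ^ (1 - γ))) hε₀
  obtain ⟨N, hN⟩ := hconv ε hε
  refine ⟨N, fun n hn s t hs hst htT => ?_⟩
  have hBα : ∀ u v, 0 ≤ u → u ≤ v → v ≤ T → ‖(A - An n) u v‖ ≤ ε * (v - u) ^ α :=
    fun u v hu huv hv => norm_sub_rev (An n u v) (A u v) ▸ hN n hn u v hu huv hv
  have hδβ : DeltaBoundedOn (A - An n) β M 0 T :=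
    (DeltaBoundedOn.weaken hCA (le_max_left CA 0)).sub (hAnβ n)
  have hδγ := hγ ▸ (deltaBoundedOn_of_norm_le hα.le hε.le hBα).interpolate hδβ hα (by linarith)
    (by positivity) (by positivity) hθ0 hθ1
  calc ‖(IA t - IA s) - (IAn n t - IAn n s)‖ = ‖(IA - IAn n) t - (IA - IAn n) s‖ := by
        simp only [Pi.sub_apply, sub_sub_sub_comm]
    _ ≤ _ := (hIA.sub (hIAn n)).norm_sub_le_mul_rpow hBα hδγ hγ1 hαγ
        (by positivity) hs hst htT
    _ ≤ ε₀ * (t - s) ^ α := by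
        gcongr
        convert hsmall.le using 2
        ring

/-- **Convergence of sewings.** Let `E` be Banach, `T > 0`, `0 < α ≤ 1 < β`. Let `A` and
`(Aⁿ)` be germs with finite `‖·‖_α` and `‖δ(·)‖_β` norms, `sup_n ‖δAⁿ‖_β ≤ R` and
`‖Aⁿ - A‖_α → 0`. Then the sewings converge in `α`-Hölder norm:
`sup_{(s,t)∈Δ₂} ‖(IA t - IA s) - (IAⁿ t - IAⁿ s)‖/(t-s)^α → 0`. -/
theorem sewing_convergence {E : Type*} [NormedAddCommGroup E] [NormedSpace ℝ E]
    [CompleteSpace E]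
    (T : ℝ) (hT : 0 < T) (α β : ℝ) (hα : 0 < α) (hα1 : α ≤ 1) (hβ : 1 < β)
    (A : ℝ → ℝ → E) (An : ℕ → ℝ → ℝ → E)
    (hA0 : ∀ t ∈ Set.Icc (0 : ℝ) T, A t t = 0)
    (hAn0 : ∀ n : ℕ, ∀ t ∈ Set.Icc (0 : ℝ) T, An n t t = 0)
    -- `‖A‖_α < ∞` and `‖δA‖_β < ∞`
    (hAα : ∃ C : ℝ, ∀ s t : ℝ, 0 ≤ s → s ≤ t → t ≤ T → ‖A s t‖ ≤ C * (t - s) ^ α)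
    (hAβ : ∃ C : ℝ, ∀ s u t : ℝ, 0 ≤ s → s ≤ u → u ≤ t → t ≤ T →
      ‖A s t - A s u - A u t‖ ≤ C * (t - s) ^ β)
    -- `‖Aⁿ‖_α < ∞` for every `n`
    (hAnα : ∀ n : ℕ, ∃ C : ℝ, ∀ s t : ℝ, 0 ≤ s → s ≤ t → t ≤ T →
      ‖An n s t‖ ≤ C * (t - s) ^ α)
    -- `sup_n ‖δAⁿ‖_β ≤ R` (in particular `‖δAⁿ‖_β < ∞` for every `n`)
    (R : ℝ) (hR : 0 < R)
    (hAnβ : ∀ n : ℕ, ∀ s u t : ℝ, 0 ≤ s → s ≤ u → u ≤ t → t ≤ T →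
      ‖An n s t - An n s u - An n u t‖ ≤ R * (t - s) ^ β)
    -- `‖Aⁿ - A‖_α → 0`
    (hconv : ∀ ε : ℝ, 0 < ε → ∃ N : ℕ, ∀ n ≥ N, ∀ s t : ℝ, 0 ≤ s → s ≤ t → t ≤ T →
      ‖An n s t - A s t‖ ≤ ε * (t - s) ^ α)
    (IA : ℝ → E) (IAn : ℕ → ℝ → E)
    (hIA : IsSewing T A IA) (hIAn : ∀ n : ℕ, IsSewing T (An n) (IAn n)) :
    ∀ ε : ℝ, 0 < ε → ∃ N : ℕ, ∀ n ≥ N, ∀ s t : ℝ, 0 ≤ s → s ≤ t → t ≤ T →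
      ‖(IA t - IA s) - (IAn n t - IAn n s)‖ ≤ ε * (t - s) ^ α :=
  sewing_convergence_general T α β hα hα1 hβ A An hAβ R hR hAnβ hconv IA IAn hIA hIAn
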